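/- arXiv:math/0303286 — 8 statements merged into one kernel-verified Lean document; each statement's English description precedes it below -/
import Mathlib

section
/- Let K be a field with more than 2 elements, E a finite-dimensional K-vector space, and let 𝒢 be the affine group of E (semidirect product of translations and GL(E)). Then every group-theoretic section s : GL(E) → 𝒢 of the canonical projection 𝒢 → GL(E) is of the form f ↦ f_a for some point a, i.e., s(GL(E)) is the stabilizer of a point a. -/
/-!
The homothety `v ↦ r • v` with `r ≠ 0, 1` (it exists because `K` has more than two elements)
is central in `GL(E)`, so its image under `s` commutes with every `s f`. That image is an affine
map with linear part `r • id`, hence has exactly one fixed point `a`; every `s f` commutes with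
it and therefore fixes `a`.
-/

open Function

section

variable {K E : Type*} [Field K] [AddCommGroup E] [Module K E]

theorem AffineMap.isFixedPt_iff_of_linear_eq_smul {φ : E →ᵃ[K] E} {r : K}
    (hφ : ∀ v, φ.linear v = r • v) (hr : r ≠ 1) {b : E} :
    IsFixedPt φ b ↔ b = (1 - r)⁻¹ • φ 0 := by
  have hφb : φ b = r • b + φ 0 := by
    rw [congrFun φ.decomp b, Pi.add_apply, hφ]
  rw [IsFixedPt, hφb, eq_inv_smul_iff₀ (sub_ne_zero.mpr hr.symm), sub_smul, one_smul,
    sub_eq_iff_eq_add, eq_comm, add_comm]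

theorem AffineEquiv.isFixedPt_of_commute_of_linear_eq_smul {φ ψ : E ≃ᵃ[K] E}
    (hcomm : Commute φ ψ) {r : K} (hψ : ∀ v, ψ.linear v = r • v) (hr : r ≠ 1) :
    IsFixedPt φ ((1 - r)⁻¹ • ψ 0) := by
  have hfix (b : E) : IsFixedPt ψ b ↔ b = (1 - r)⁻¹ • ψ 0 :=
    AffineMap.isFixedPt_iff_of_linear_eq_smul (φ := ψ.toAffineMap) hψ hr
  have hsemiconj : Semiconj φ ψ ψ := fun b => by
    simpa only [AffineEquiv.coe_mul, comp_apply] using congrFun (congrArg DFunLike.coe hcomm.eq) b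
  exact (hfix _).mp (((hfix _).mpr rfl).map hsemiconj)

theorem LinearEquiv.commute_smulOfNeZero (f : E ≃ₗ[K] E) {r : K} (hr : r ≠ 0) :
    Commute f (LinearEquiv.smulOfNeZero K E r hr) :=
  LinearEquiv.ext fun v => f.map_smul r v

end

theorem stmt_0_general (K : Type*) [Field K] (hK : ∃ x : K, x ≠ 0 ∧ x ≠ 1)
    (E : Type*) [AddCommGroup E] [Module K E]
    (s : (E ≃ₗ[K] E) →* (E ≃ᵃ[K] E))
    (hs : ∀ f : E ≃ₗ[K] E, (s f).linear = f) :
    ∃ a : E, ∀ f : E ≃ₗ[K] E, s f a = a := by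
  obtain ⟨r, hr0, hr1⟩ := hK
  set h := LinearEquiv.smulOfNeZero K E r hr0
  refine ⟨(1 - r)⁻¹ • s h 0, fun f => ?_⟩
  refine AffineEquiv.isFixedPt_of_commute_of_linear_eq_smul ((f.commute_smulOfNeZero hr0).map s)
    (fun v => by rw [hs, LinearEquiv.smulOfNeZero_apply]) hr1

/-- If `K` is a field with more than two elements and `E` a finite-dimensional
`K`-vector space, then every group-theoretic section of the projection from the
affine group of `E` to `GL(E)` (sending an affine automorphism to its linear part)
is of the form `f ↦ f_a`, i.e. its image is the stabilizer of some point `a`. -/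
theorem stmt_0 (K : Type*) [Field K] (hK : ∃ x : K, x ≠ 0 ∧ x ≠ 1)
    (E : Type*) [AddCommGroup E] [Module K E] [FiniteDimensional K E]
    (s : (E ≃ₗ[K] E) →* (E ≃ᵃ[K] E))
    (hs : ∀ f : E ≃ₗ[K] E, (s f).linear = f) :
    ∃ a : E, ∀ f : E ≃ₗ[K] E, s f a = a :=
  stmt_0_general K hK E s hs
end

section
/- Let P be a set of 'points' and P* a set of 'lines' with |P*| > 1, with an incidence relation such that: every line is incident with exactly 3 points; any two distinct points are incident with a unique common line; any two distinct lines are incident with a unique common point. Then |P| = 7. -/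
/-!
Choose a point `a` off some line `m`: a line other than `m` has a point besides its intersection
with `m`. The lines joining `a` to the `n + 1` points of `m` are pairwise distinct, and every point
other than `a` lies on exactly one of them; each carries `n` points besides `a`, so there are
`(n + 1) * n + 1` points in all. For three points per line, `n = 2` gives `7`.
-/

section

variable {P L : Type*} {I : P → L → Prop}

theorem exists_incident_not_incident {l m : L} (hl : 1 < {p | I p l}.ncard)
    (hlm : ∃! p, I p l ∧ I p m) : ∃ a, I a l ∧ ¬ I a m := by
  obtain ⟨x, -, hx⟩ := hlm
  obtain ⟨a, hal, hax⟩ := Set.exists_ne_of_one_lt_ncard hl x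
  exact ⟨a, hal, fun ham => hax (hx a ⟨hal, ham⟩)⟩

/-- With `ℓ q` the line through `a` and the point `q` of `m`, every point other than `a` lies on
exactly one `ℓ q`. -/
theorem bijective_sigma_pencil (hpp : ∀ p q : P, p ≠ q → ∃! l : L, I p l ∧ I q l)
    (hll : ∀ l m : L, l ≠ m → ∃! p : P, I p l ∧ I p m) {a : P} {m : L} (ham : ¬ I a m)
    (ℓ : {q // I q m} → L) (hℓ : ∀ q, I a (ℓ q) ∧ I q.1 (ℓ q)) :
    Function.Bijective
      (fun x : Σ q, ↥({p | I p (ℓ q)} \ {a}) => (⟨x.2, x.2.2.2⟩ : {p // p ≠ a})) := by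
  have hℓm : ∀ q, ℓ q ≠ m := fun q h => ham (h ▸ (hℓ q).1)
  constructor
  · rintro ⟨q, p, hpq, hpa⟩ ⟨q', p', hpq', _⟩ h
    obtain rfl : p = p' := congrArg Subtype.val h
    have hqq' : ℓ q = ℓ q' := (hpp a p (Ne.symm hpa)).unique ⟨(hℓ q).1, hpq⟩ ⟨(hℓ q').1, hpq'⟩
    obtain rfl : q = q' := Subtype.ext <|
      (hll (ℓ q) m (hℓm q)).unique ⟨(hℓ q).2, q.2⟩ ⟨hqq' ▸ (hℓ q').2, q'.2⟩
    rfl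
  · rintro ⟨p, hpa⟩
    obtain ⟨n, ⟨han, hpn⟩, -⟩ := hpp a p (Ne.symm hpa)
    obtain ⟨q, ⟨hqn, hqm⟩, -⟩ := hll n m fun h => ham (h ▸ han)
    have hn : ℓ ⟨q, hqm⟩ = n :=
      (hpp a q fun h => ham (h ▸ hqm)).unique (hℓ ⟨q, hqm⟩) ⟨han, hqn⟩
    exact ⟨⟨⟨q, hqm⟩, p, hn ▸ hpn, hpa⟩, rfl⟩

theorem card_points_eq_of_not_incident {n : ℕ} (hcard : ∀ l : L, {p | I p l}.ncard = n + 1)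
    (hpp : ∀ p q : P, p ≠ q → ∃! l : L, I p l ∧ I q l)
    (hll : ∀ l m : L, l ≠ m → ∃! p : P, I p l ∧ I p m) {a : P} {m : L} (ham : ¬ I a m) :
    Nat.card P = (n + 1) * n + 1 := by
  classical
  choose ℓ hℓ using fun q : {q // I q m} => (hpp a q fun h => ham (h ▸ q.2)).exists
  have hfinite (l : L) : {p | I p l}.Finite := Set.finite_of_ncard_ne_zero (by simp [hcard])
  have : Fintype {q // I q m} := (hfinite m).fintype
  have (q : {q // I q m}) : Finite ↥({p | I p (ℓ q)} \ {a}) := ((hfinite _).sdiff).to_subtype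
  have hfiber (q : {q // I q m}) : ({p | I p (ℓ q)} \ {a}).ncard = n := by
    rw [Set.ncard_sdiff_singleton_of_mem (s := {p | I p (ℓ q)}) (hℓ q).1, hcard,
      Nat.add_sub_cancel]
  have hbij := bijective_sigma_pencil hpp hll ham ℓ hℓ
  have : Finite {p // p ≠ a} := Finite.of_surjective _ hbij.2
  calc Nat.card P = Nat.card {p // p ≠ a} + 1 := by
        rw [← Finite.card_option, Nat.card_congr (Equiv.optionSubtypeNe a)]
    _ = ∑ q : {q // I q m}, ({p | I p (ℓ q)} \ {a}).ncard + 1 := by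
      rw [← Nat.card_eq_of_bijective _ hbij, Nat.card_sigma]
      rfl
    _ = (n + 1) * n + 1 := by
      rw [Finset.sum_congr rfl fun q _ => hfiber q, Finset.sum_const, Finset.card_univ,
        ← Nat.card_eq_fintype_card, smul_eq_mul]
      exact congrArg (· * n + 1) (hcard m)

theorem card_points_eq {n : ℕ} (hn : 0 < n) (hcard : ∀ l : L, {p | I p l}.ncard = n + 1)
    (hpp : ∀ p q : P, p ≠ q → ∃! l : L, I p l ∧ I q l)
    (hll : ∀ l m : L, l ≠ m → ∃! p : P, I p l ∧ I p m) (hL : ∃ l m : L, l ≠ m) :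
    Nat.card P = n ^ 2 + n + 1 := by
  obtain ⟨l, m, hlm⟩ := hL
  obtain ⟨a, -, ham⟩ := exists_incident_not_incident (by rw [hcard]; omega) (hll l m hlm)
  rw [card_points_eq_of_not_incident hcard hpp hll ham]
  ring

end

/-- In an abstract incidence structure where every line is incident with exactly
three points, two distinct points lie on a unique common line, two distinct lines
meet in a unique common point, and there are at least two lines, the set of points
has cardinality 7. -/
theorem stmt_2 (P L : Type*) (I : P → L → Prop)
    (h3 : ∀ l : L, {p : P | I p l}.ncard = 3)
    (hpp : ∀ p q : P, p ≠ q → ∃! l : L, I p l ∧ I q l)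
    (hll : ∀ l m : L, l ≠ m → ∃! p : P, I p l ∧ I p m)
    (hL : ∃ l m : L, l ≠ m) :
    Nat.card P = 7 :=
  card_points_eq two_pos h3 hpp hll hL
end

section
/- Let P and P* be an incidence structure satisfying: every line has exactly 3 points, two distinct points lie on a unique line, two distinct lines meet in a unique point, and |P*| > 1. Define E = P ∪ {0} with addition: x + 0 = 0 + x = x, x + x = 0, and for distinct nonzero x ≠ y, x + y = z where z is the third point on the line through x and y. Then this addition is commutative and associative, making E an F₂-vector space of dimension 3. -/
/-!
Any two points of a line determine the third, which gives commutativity and the cancellation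
law `x + (x + y) = y`. For non-collinear points `a, b, c`, the line through `a + b` and `c`
meets the line through `a` and `b + c`; the intersection point is the third point on both, so
`(a + b) + c = a + (b + c)`. The resulting group has exponent 2, hence is an `F₂`-vector space.
For two lines `l ≠ m` meeting in `a`, points `b, c ∈ l` and `d ∈ m` other than `a` form a basis:
`b + c = a ≠ d` gives independence, and their span contains `l`, then `m`, and then every
point `p`, since the line through `p` and `b` meets `m` outside `b`.
-/

theorem Set.eq_of_ncard_eq_three_of_mem {α : Type*} {s : Set α} {x y z : α} (hs : s.ncard = 3)
    (hx : x ∈ s) (hy : y ∈ s) (hz : z ∈ s) (hxy : x ≠ y) (hxz : x ≠ z) (hyz : y ≠ z) :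
    s = {x, y, z} := by
  refine (Set.eq_of_subset_of_ncard_le (by simp [Set.insert_subset_iff, *]) ?_
    (Set.finite_of_ncard_pos (by omega))).symm
  rw [hs, Set.ncard_insert_of_notMem (by simp [hxy, hxz]), Set.ncard_pair hyz]

abbrev addCommGroupOfAddSelf {α : Type*} (add : α → α → α) (zero : α)
    (add_comm : ∀ x y, add x y = add y x) (add_assoc : ∀ x y z, add (add x y) z = add x (add y z))
    (add_zero : ∀ x, add x zero = x) (add_self : ∀ x, add x x = zero) : AddCommGroup α :=
  letI : Add α := ⟨add⟩
  letI : Zero α := ⟨zero⟩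
  letI : Neg α := ⟨id⟩
  { add_assoc := add_assoc
    zero_add x := (add_comm zero x).trans (add_zero x)
    add_zero := add_zero
    neg_add_cancel := add_self
    add_comm := add_comm
    nsmul := nsmulRec
    zsmul := zsmulRec }

theorem nonempty_addEquiv_fin_three_zmod_two {G : Type*} [AddCommGroup G]
    (hself : ∀ x : G, x + x = 0) {b c d : G} (hb : b ≠ 0) (hc : c ≠ 0) (hd : d ≠ 0)
    (hbc : b ≠ c) (hbd : b ≠ d) (hcd : c ≠ d) (hbcd : b + c ≠ d)
    (hspan : AddSubgroup.closure {b, c, d} = ⊤) :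
    Nonempty (G ≃+ (Fin 3 → ZMod 2)) := by
  let _ := AddCommGroup.zmodModule (n := 2) fun x => (two_nsmul x).trans (hself x)
  have hsum_eq_zero : ∀ x y : G, x + y = 0 ↔ x = y := fun x y => by
    rw [add_eq_zero_iff_eq_neg, neg_eq_of_add_eq_zero_left (hself y)]
  have hli : LinearIndependent (ZMod 2) ![b, c, d] := by
    refine Fintype.linearIndependent_iff.mpr fun g hg => ?_
    rw [Fin.sum_univ_three] at hg
    have h01 : ∀ t : ZMod 2, t = 0 ∨ t = 1 := by decide
    rcases h01 (g 0) with h0 | h0 <;> rcases h01 (g 1) with h1 | h1 <;>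
      rcases h01 (g 2) with h2 | h2 <;>
      simp [Fin.forall_fin_succ, h0, h1, h2, hsum_eq_zero, hb, hc, hd, hbc, hbd, hcd, hbcd]
        at hg ⊢
  have hsp : ⊤ ≤ Submodule.span (ZMod 2) (Set.range ![b, c, d]) := by
    rintro x -
    rw [Matrix.range_cons, Matrix.range_cons, Matrix.range_cons_empty]
    exact AddSubgroup.closure_le (K := (Submodule.span (ZMod 2) _).toAddSubgroup) |>.mpr
      Submodule.subset_span (hspan ▸ AddSubgroup.mem_top x)
  exact ⟨(Module.Basis.mk hli hsp).equivFun.toAddEquiv⟩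

section

variable {P L : Type*}

structure IsSteinerTripleSystem (I : P → L → Prop) : Prop where
  ncard_eq_three : ∀ l, {p | I p l}.ncard = 3
  existsUnique_line : ∀ p q : P, p ≠ q → ∃! l, I p l ∧ I q l

structure IsThirdPointAddition (I : P → L → Prop) (add : Option P → Option P → Option P) :
    Prop where
  add_none : ∀ x, add x none = x
  none_add : ∀ x, add none x = x
  add_self : ∀ x, add x x = none
  add_some : ∀ x y : P, x ≠ y → ∃ l, I x l ∧ I y l ∧
    ∃ z, add (some x) (some y) = some z ∧ z ≠ x ∧ z ≠ y ∧ I z l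

namespace IsSteinerTripleSystem

variable {I : P → L → Prop}

theorem eq_or_eq_or_eq (hT : IsSteinerTripleSystem I) {l : L} {x y z p : P} (hxy : x ≠ y)
    (hxz : x ≠ z) (hyz : y ≠ z) (hx : I x l) (hy : I y l) (hz : I z l) (hp : I p l) :
    p = x ∨ p = y ∨ p = z := by
  have hp' : p ∈ {q | I q l} := hp
  simpa [Set.eq_of_ncard_eq_three_of_mem (hT.ncard_eq_three l) hx hy hz hxy hxz hyz] using hp'

theorem line_eq (hT : IsSteinerTripleSystem I) {l m : L} {x y : P} (hxy : x ≠ y) (hxl : I x l)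
    (hyl : I y l) (hxm : I x m) (hym : I y m) : l = m :=
  (hT.existsUnique_line x y hxy).unique ⟨hxl, hyl⟩ ⟨hxm, hym⟩

theorem exists_pair_of_incident (hT : IsSteinerTripleSystem I) {l : L} {p : P} (hp : I p l) :
    ∃ q r, q ≠ r ∧ q ≠ p ∧ r ≠ p ∧ I q l ∧ I r l := by
  have hcard : ({q | I q l} \ {p}).ncard = 2 := by
    rw [Set.ncard_sdiff_singleton_of_mem (s := {q | I q l}) hp, hT.ncard_eq_three l]
  obtain ⟨q, r, hqr, hs⟩ := Set.ncard_eq_two.mp hcard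
  have hq : q ∈ {q | I q l} \ {p} := hs ▸ by simp
  have hr : r ∈ {q | I q l} \ {p} := hs ▸ by simp
  exact ⟨q, r, hqr, hq.2, hr.2, hq.1, hr.1⟩

end IsSteinerTripleSystem

namespace IsThirdPointAddition

variable {I : P → L → Prop} {add : Option P → Option P → Option P}

theorem add_some_some_eq (hT : IsSteinerTripleSystem I) (hA : IsThirdPointAddition I add)
    {l : L} {x y z : P} (hxy : x ≠ y) (hxz : x ≠ z) (hyz : y ≠ z) (hx : I x l) (hy : I y l)
    (hz : I z l) : add (some x) (some y) = some z := by
  obtain ⟨m, hxm, hym, w, hw, hwx, hwy, hwm⟩ := hA.add_some x y hxy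
  obtain rfl := hT.line_eq hxy hxm hym hx hy
  rw [hw, ((hT.eq_or_eq_or_eq hxy hxz hyz hx hy hz hwm).resolve_left hwx).resolve_left hwy]

theorem comm (hT : IsSteinerTripleSystem I) (hA : IsThirdPointAddition I add)
    (x y : Option P) : add x y = add y x := by
  rcases x with _ | x
  · rw [hA.none_add, hA.add_none]
  rcases y with _ | y
  · rw [hA.none_add, hA.add_none]
  obtain rfl | hxy := eq_or_ne x y
  · rfl
  obtain ⟨l, hx, hy, z, hz, hzx, hzy, hzl⟩ := hA.add_some x y hxy
  rw [hz, hA.add_some_some_eq hT hxy.symm hzy.symm hzx.symm hy hx hzl]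

theorem add_add_cancel_left (hT : IsSteinerTripleSystem I) (hA : IsThirdPointAddition I add)
    (x y : Option P) : add x (add x y) = y := by
  rcases x with _ | x
  · rw [hA.none_add, hA.none_add]
  rcases y with _ | y
  · rw [hA.add_none, hA.add_self]
  obtain rfl | hxy := eq_or_ne x y
  · rw [hA.add_self, hA.add_none]
  obtain ⟨l, hx, hy, z, hz, hzx, hzy, hzl⟩ := hA.add_some x y hxy
  rw [hz, hA.add_some_some_eq hT hzx.symm hxy hzy hx hzl hy]

theorem add_assoc_of_not_collinear (hT : IsSteinerTripleSystem I)
    (hA : IsThirdPointAddition I add) (hll : ∀ l m : L, l ≠ m → ∃ p, I p l ∧ I p m) {a b c : P}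
    (hab : a ≠ b) (hbc : b ≠ c) (habc : ¬ ∃ l, I a l ∧ I b l ∧ I c l) :
    add (add (some a) (some b)) (some c) = add (some a) (add (some b) (some c)) := by
  obtain ⟨l₁, ha₁, hb₁, u, hu, hua, hub, hu₁⟩ := hA.add_some a b hab
  obtain ⟨l₂, hb₂, hc₂, v, hv, hvb, hvc, hv₂⟩ := hA.add_some b c hbc
  have hc₁ : ¬ I c l₁ := fun h => habc ⟨l₁, ha₁, hb₁, h⟩
  have ha₂ : ¬ I a l₂ := fun h => habc ⟨l₂, h, hb₂, hc₂⟩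
  have huc : u ≠ c := by rintro rfl; exact hc₁ hu₁
  have hav : a ≠ v := by rintro rfl; exact ha₂ hv₂
  obtain ⟨l₃, hu₃, hc₃, -⟩ := hA.add_some u c huc
  obtain ⟨l₄, ha₄, hv₄, -⟩ := hA.add_some a v hav
  have h₁₂ : l₁ ≠ l₂ := fun h => hc₁ (h ▸ hc₂)
  have h₁₃ : l₃ ≠ l₁ := fun h => hc₁ (h ▸ hc₃)
  have h₂₄ : l₄ ≠ l₂ := fun h => ha₂ (h ▸ ha₄)
  have h₃₄ : l₃ ≠ l₄ := fun h => h₁₃ (hT.line_eq hua.symm (h ▸ ha₄) hu₃ ha₁ hu₁)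
  obtain ⟨p, hp₃, hp₄⟩ := hll l₃ l₄ h₃₄
  have hpu : p ≠ u := by
    rintro rfl
    obtain rfl := hT.line_eq hua.symm ha₄ hp₄ ha₁ hu₁
    exact h₁₂ (hT.line_eq hvb hv₄ hb₁ hv₂ hb₂)
  have hpc : p ≠ c := by rintro rfl; exact h₂₄ (hT.line_eq hvc hv₄ hp₄ hv₂ hc₂)
  have hpa : p ≠ a := by rintro rfl; exact h₁₃ (hT.line_eq hua.symm hp₃ hu₃ ha₁ hu₁)
  have hpv : p ≠ v := by
    rintro rfl
    obtain rfl := hT.line_eq hvc hp₃ hc₃ hv₂ hc₂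
    exact h₁₂ (hT.line_eq hub hu₁ hb₁ hu₃ hb₂)
  rw [hu, hv, hA.add_some_some_eq hT huc hpu.symm hpc.symm hu₃ hc₃ hp₃,
    hA.add_some_some_eq hT hav hpa.symm hpv.symm ha₄ hv₄ hp₄]

theorem assoc (hT : IsSteinerTripleSystem I) (hA : IsThirdPointAddition I add)
    (hll : ∀ l m : L, l ≠ m → ∃ p, I p l ∧ I p m) (x y z : Option P) :
    add (add x y) z = add x (add y z) := by
  rcases x with _ | a
  · rw [hA.none_add, hA.none_add]
  rcases z with _ | c
  · rw [hA.add_none, hA.add_none]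
  rcases y with _ | b
  · rw [hA.add_none, hA.none_add]
  obtain rfl | hab := eq_or_ne a b
  · rw [hA.add_self, hA.none_add, hA.add_add_cancel_left hT]
  obtain rfl | hbc := eq_or_ne b c
  · rw [hA.add_self, hA.add_none, hA.comm hT _ (some b), hA.comm hT (some a),
      hA.add_add_cancel_left hT]
  obtain rfl | hac := eq_or_ne a c
  · rw [hA.comm hT _ (some a), hA.comm hT (some b)]
  by_cases habc : ∃ l, I a l ∧ I b l ∧ I c l
  · obtain ⟨l, ha, hb, hc⟩ := habc
    rw [hA.add_some_some_eq hT hab hac hbc ha hb hc,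
      hA.add_some_some_eq hT hbc hab.symm hac.symm hb hc ha, hA.add_self, hA.add_self]
  · exact hA.add_assoc_of_not_collinear hT hll hab hbc habc

theorem some_mem_of_incident (hT : IsSteinerTripleSystem I) (hA : IsThirdPointAddition I add)
    {S : Set (Option P)} (hS : ∀ x ∈ S, ∀ y ∈ S, add x y ∈ S) {l : L} {x y p : P} (hxy : x ≠ y)
    (hx : I x l) (hy : I y l) (hp : I p l) (hxS : some x ∈ S) (hyS : some y ∈ S) :
    some p ∈ S := by
  obtain ⟨m, hxm, hym, z, hz, hzx, hzy, hzm⟩ := hA.add_some x y hxy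
  obtain rfl := hT.line_eq hxy hxm hym hx hy
  rcases hT.eq_or_eq_or_eq hxy hzx.symm hzy.symm hx hy hzm hp with rfl | rfl | rfl
  exacts [hxS, hyS, hz ▸ hS _ hxS _ hyS]

theorem forall_mem_of_add_mem (hT : IsSteinerTripleSystem I) (hA : IsThirdPointAddition I add)
    (hll : ∀ l m : L, l ≠ m → ∃ p, I p l ∧ I p m) {S : Set (Option P)}
    (hS : ∀ x ∈ S, ∀ y ∈ S, add x y ∈ S) {l m : L} {a b c d : P} (hal : I a l) (ham : I a m)
    (hbl : I b l) (hcl : I c l) (hdm : I d m) (hbc : b ≠ c) (had : a ≠ d) (hbm : ¬ I b m)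
    (hbS : some b ∈ S) (hcS : some c ∈ S) (hdS : some d ∈ S) (x : Option P) : x ∈ S := by
  have hmS : ∀ p, I p m → some p ∈ S :=
    fun p hp => hA.some_mem_of_incident hT hS had ham hdm hp
      (hA.some_mem_of_incident hT hS hbc hbl hcl hal hbS hcS) hdS
  rcases x with _ | p
  · exact hA.add_self (some b) ▸ hS _ hbS _ hbS
  obtain rfl | hpb := eq_or_ne p b
  · exact hbS
  obtain ⟨n, hpn, hbn⟩ := (hT.existsUnique_line p b hpb).exists
  obtain ⟨q, hqn, hqm⟩ := hll n m (by rintro rfl; exact hbm hbn)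
  exact hA.some_mem_of_incident hT hS (by rintro rfl; exact hbm hqm) hbn hqn hpn hbS (hmS q hqm)

theorem exists_equiv_fin_three (hT : IsSteinerTripleSystem I)
    (hA : IsThirdPointAddition I add) (hll : ∀ l m : L, l ≠ m → ∃ p, I p l ∧ I p m)
    {l m : L} (hlm : l ≠ m) :
    ∃ e : Option P ≃ (Fin 3 → ZMod 2), e none = 0 ∧ ∀ x y, e (add x y) = e x + e y := by
  let _ := addCommGroupOfAddSelf add none (hA.comm hT) (hA.assoc hT hll) hA.add_none hA.add_self
  obtain ⟨a, hal, ham⟩ := hll l m hlm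
  obtain ⟨b, c, hbc, hba, hca, hbl, hcl⟩ := hT.exists_pair_of_incident hal
  obtain ⟨d, -, -, hda, -, hdm, -⟩ := hT.exists_pair_of_incident ham
  have hnm : ∀ p, I p l → p ≠ a → ¬ I p m := fun p hpl hpa hpm =>
    hlm (hT.line_eq hpa.symm hal hpl ham hpm)
  have hne : ∀ {p}, I p l → p ≠ a → p ≠ d := by rintro p hpl hpa rfl; exact hnm p hpl hpa hdm
  have hspan : AddSubgroup.closure {some b, some c, some d} = ⊤ :=
    eq_top_iff.mpr fun x _ => hA.forall_mem_of_add_mem hT hll (fun _ hx _ hy => add_mem hx hy)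
      hal ham hbl hcl hdm hbc hda.symm (hnm b hbl hba) (AddSubgroup.subset_closure (by simp))
      (AddSubgroup.subset_closure (by simp)) (AddSubgroup.subset_closure (by simp)) x
  obtain ⟨e⟩ := nonempty_addEquiv_fin_three_zmod_two hA.add_self (Option.some_ne_none b)
    (Option.some_ne_none c) (Option.some_ne_none d) (Option.some_injective _ |>.ne hbc)
    (Option.some_injective _ |>.ne (hne hbl hba)) (Option.some_injective _ |>.ne (hne hcl hca))
    (by
      rw [show some b + some c = some a from hA.add_some_some_eq hT hbc hba hca hbl hcl hal]
      exact Option.some_injective _ |>.ne hda.symm) hspan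
  exact ⟨e.toEquiv, map_zero e, map_add e⟩

end IsThirdPointAddition

end

/-- Given an incidence structure as above and the addition on `E = P ∪ {0}`
(encoded as `Option P` with `none = 0`) defined by `x + 0 = 0 + x = x`,
`x + x = 0`, and `x + y = z` the third point of the line through two distinct
points `x ≠ y`, this addition is commutative and associative and makes `E` an
`F₂`-vector space of dimension 3 (i.e. `E` is isomorphic, as a set with this
addition, to `(ZMod 2)³` with `none ↦ 0`). -/
theorem stmt_3 (P L : Type*) (I : P → L → Prop)
    (h3 : ∀ l : L, {p : P | I p l}.ncard = 3)
    (hpp : ∀ p q : P, p ≠ q → ∃! l : L, I p l ∧ I q l)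
    (hll : ∀ l m : L, l ≠ m → ∃! p : P, I p l ∧ I p m)
    (hL : ∃ l m : L, l ≠ m)
    (add : Option P → Option P → Option P)
    (hadd0 : ∀ x : Option P, add x none = x ∧ add none x = x)
    (haddself : ∀ x : Option P, add x x = none)
    (haddline : ∀ x y : P, x ≠ y → ∃ l : L, I x l ∧ I y l ∧
      ∃ z : P, add (some x) (some y) = some z ∧ z ≠ x ∧ z ≠ y ∧ I z l) :
    (∀ x y : Option P, add x y = add y x) ∧
    (∀ x y z : Option P, add (add x y) z = add x (add y z)) ∧
    ∃ e : Option P ≃ (Fin 3 → ZMod 2),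
      e none = 0 ∧ ∀ x y : Option P, e (add x y) = e x + e y := by
  have hT : IsSteinerTripleSystem I := ⟨h3, hpp⟩
  have hA : IsThirdPointAddition I add :=
    ⟨fun x => (hadd0 x).1, fun x => (hadd0 x).2, haddself, haddline⟩
  have hll' : ∀ l m : L, l ≠ m → ∃ p, I p l ∧ I p m := fun l m h => (hll l m h).exists
  obtain ⟨l, m, hlm⟩ := hL
  exact ⟨hA.comm hT, hA.assoc hT hll', hA.exists_equiv_fin_three hT hll' hlm⟩
end

section
/- Let E be a 3-dimensional F₂-vector space and P(E) its projective plane. A bijection h : P(E) → P(E) that maps collinear triples to collinear triples is induced by a linear automorphism of E. -/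
/-- A bijection of the projective plane `P(E) = E \ {0}` of a 3-dimensional
`F₂`-vector space `E` preserving collinearity (three distinct nonzero points
`x, y, z` are collinear iff `x + y + z = 0`) is induced by a linear automorphism
of `E`. -/
theorem stmt_4 (E : Type*) [AddCommGroup E] [Module (ZMod 2) E]
    (hdim : Module.finrank (ZMod 2) E = 3)
    (h : {x : E // x ≠ 0} ≃ {x : E // x ≠ 0})
    (hcol : ∀ x y z : {x : E // x ≠ 0}, x ≠ y → y ≠ z → x ≠ z →
      (x : E) + y + z = 0 → (h x : E) + h y + h z = 0) :
    ∃ g : E ≃ₗ[ZMod 2] E, ∀ x : {x : E // x ≠ 0}, (h x : E) = g x := by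
  have hself : ∀ a : E, a + a = 0 := by
    intro a
    have : (2 : ZMod 2) • a = a + a := two_smul _ a
    rw [show (2 : ZMod 2) = 0 by decide, zero_smul] at this
    exact this.symm
  classical
  set g : E → E := fun x => if hx : x = 0 then 0 else (h ⟨x, hx⟩ : E) with hg
  have hg0 : g 0 = 0 := by simp [hg]
  have hgne : ∀ (x : E) (hx : x ≠ 0), g x = (h ⟨x, hx⟩ : E) := by
    intro x hx; simp [hg, hx]
  have hadd : ∀ x y : E, g (x + y) = g x + g y := by
    intro x y
    by_cases hx : x = 0
    · subst hx; simp [hg0]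
    by_cases hy : y = 0
    · subst hy; simp [hg0]
    have key : ∀ a b c : E, a + b + c = 0 → c = a + b := by
      intro a b c habc
      have h1 : -(a + b) = c := neg_eq_of_add_eq_zero_right habc
      have h2 : -(a + b) = a + b := neg_eq_of_add_eq_zero_right (hself (a + b))
      rw [← h1, h2]
    by_cases hxy : x + y = 0
    · have hyx : y = x := by
        have h1 : -x = y := neg_eq_of_add_eq_zero_right hxy
        have h2 : -x = x := neg_eq_of_add_eq_zero_right (hself x)
        rw [← h1, h2]
      subst hyx
      rw [hxy, hg0, hself]
    · have hxy' : x ≠ y := by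
        intro hh; subst hh; exact hxy (hself x)
      have h1 : (⟨x, hx⟩ : {x : E // x ≠ 0}) ≠ ⟨y, hy⟩ := by
        simpa [Subtype.ext_iff] using hxy'
      have h2 : (⟨y, hy⟩ : {x : E // x ≠ 0}) ≠ ⟨x + y, hxy⟩ := by
        simp only [ne_eq, Subtype.mk.injEq]
        intro hh
        exact hx (by apply add_right_cancel (b := y); rw [zero_add]; exact hh.symm)
      have h3 : (⟨x, hx⟩ : {x : E // x ≠ 0}) ≠ ⟨x + y, hxy⟩ := by
        simp only [ne_eq, Subtype.mk.injEq]
        intro hh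
        exact hy (by apply add_left_cancel (a := x); rw [add_zero]; exact hh.symm)
      have hsum : x + y + (x + y) = 0 := hself _
      have := hcol ⟨x, hx⟩ ⟨y, hy⟩ ⟨x + y, hxy⟩ h1 h2 h3 hsum
      rw [hgne x hx, hgne y hy, hgne (x + y) hxy]
      exact key _ _ _ this
  have hzero : ∀ x : E, g x = 0 → x = 0 := by
    intro x hx
    by_contra hne
    rw [hgne x hne] at hx
    exact (h ⟨x, hne⟩).2 hx
  have hinj : Function.Injective g := by
    intro a b hab
    by_cases ha : a = 0
    · subst ha; rw [hg0] at hab; exact (hzero b hab.symm).symm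
    by_cases hb : b = 0
    · subst hb; rw [hg0] at hab; exact hzero a hab
    rw [hgne a ha, hgne b hb] at hab
    have := h.injective (Subtype.ext hab)
    simpa [Subtype.ext_iff] using this
  have hsurj : Function.Surjective g := by
    intro z
    by_cases hz : z = 0
    · exact ⟨0, by rw [hg0, hz]⟩
    · refine ⟨(h.symm ⟨z, hz⟩ : E), ?_⟩
      rw [hgne _ (h.symm ⟨z, hz⟩).2]
      simp
  let gm : E →+ E := AddMonoidHom.mk' g hadd
  let gl : E →ₗ[ZMod 2] E := gm.toZModLinearMap 2
  refine ⟨LinearEquiv.ofBijective gl ⟨hinj, hsurj⟩, ?_⟩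
  intro x
  have := hgne x.1 x.2
  simp only [Subtype.coe_eta] at this
  exact this.symm
end

section
/- Let E be a 3-dimensional F₂-vector space and g ∈ GL(E) of order 3. There exists exactly one subgroup M of GL(E) of order 7 such that for some (equivalently every) generator f of M with minimal polynomial X³+X+1, one has g f g⁻¹ = f². -/
/-!
An element `g` of order 3 of `GL₃(𝔽₂)` fixes a nonzero vector `w`, since `8 ≢ 1 (mod 3)`, and
moves some vector `y`; one of `y`, `w + y` is then a cyclic vector `v`, so that in the basis
`v, g v, g² v` the element `g` becomes the permutation matrix `C` of a 3-cycle. The statement is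
invariant under this change of basis, and for `C` an exhaustive search over all `3 × 3` matrices
shows that the solutions of `F³ + F + 1 = 0`, `C F C⁻¹ = F²` are exactly `F₀, F₀², F₀⁴` for a
single element `F₀` of order 7.
-/

open Polynomial Module

/-- The paper's "`g` is related to `M`", with `p` singling out the generators with minimal
polynomial `X³ + X + 1` and `n = 7` the order of `M`. -/
def IsRelated {G : Type*} [Group G] (p : G → Prop) (n : ℕ) (g : G) (M : Subgroup G) : Prop :=
  Nat.card M = n ∧ (∃ f ∈ M, p f ∧ g * f * g⁻¹ = f ^ 2) ∧ ∀ f ∈ M, p f → g * f * g⁻¹ = f ^ 2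

section Transport

variable {G H : Type*} [Group G] [Group H] {p : G → Prop} {r : H → Prop} {n : ℕ}

lemma MulEquiv.isRelated_mapSubgroup_iff (Φ : G ≃* H) (hpr : ∀ f, p f ↔ r (Φ f)) (g : G)
    (M : Subgroup G) : IsRelated p n g M ↔ IsRelated r n (Φ g) (Φ.mapSubgroup M) := by
  have hconj (f : G) : Φ g * Φ f * (Φ g)⁻¹ = Φ f ^ 2 ↔ g * f * g⁻¹ = f ^ 2 := by
    simp only [← map_inv, ← map_mul, ← map_pow, Φ.apply_eq_iff_eq]
  rw [IsRelated, IsRelated, Subgroup.card_mapSubgroup]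
  simp only [MulEquiv.coe_mapSubgroup, Subgroup.mem_map, MulEquiv.coe_toMonoidHom,
    exists_exists_and_eq_and, forall_exists_index, and_imp, forall_apply_eq_imp_iff₂, ← hpr,
    hconj]

lemma MulEquiv.existsUnique_isRelated_iff (Φ : G ≃* H) (hpr : ∀ f, p f ↔ r (Φ f)) (g : G) :
    (∃! M, IsRelated p n g M) ↔ ∃! N, IsRelated r n (Φ g) N :=
  Φ.mapSubgroup.toEquiv.existsUnique_congr (Φ.isRelated_mapSubgroup_iff hpr g)

end Transport

lemma conj_eq_sq_of_mem_zpowers {G : Type*} [Group G] {g x y : G} (hx : g * x * g⁻¹ = x ^ 2)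
    (hy : y ∈ Subgroup.zpowers x) : g * y * g⁻¹ = y ^ 2 := by
  obtain ⟨k, rfl⟩ := Subgroup.mem_zpowers_iff.1 hy
  rw [← conj_zpow, hx, ← zpow_natCast, ← zpow_natCast, ← zpow_mul, ← zpow_mul, mul_comm]

noncomputable def Module.Basis.toGL {ι R M : Type*} [Fintype ι] [DecidableEq ι] [CommRing R]
    [AddCommGroup M] [Module R M] (b : Basis ι R M) : (M ≃ₗ[R] M) ≃* GL ι R :=
  (LinearMap.GeneralLinearGroup.generalLinearEquiv R M).symm.trans
    (Units.mapEquiv (LinearMap.toMatrixAlgEquiv b).toMulEquiv)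

@[simp]
lemma Module.Basis.coe_toGL {ι R M : Type*} [Fintype ι] [DecidableEq ι] [CommRing R]
    [AddCommGroup M] [Module R M] (b : Basis ι R M) (f : M ≃ₗ[R] M) :
    (b.toGL f : Matrix ι ι R) = LinearMap.toMatrix b b f :=
  rfl

lemma LinearEquiv.exists_ne_zero_apply_eq_self {R M : Type*} [Semiring R] [AddCommMonoid M]
    [Module R M] [Finite M] {p : ℕ} [Fact p.Prime] (g : M ≃ₗ[R] M) (hg : g ^ p = 1)
    (hM : ¬ Nat.card M ≡ 1 [MOD p]) : ∃ w ≠ 0, g w = w := by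
  classical
  have := Fintype.ofFinite M
  let σ : Equiv.Perm M := g.toEquiv
  have hσ : σ ^ p ^ 1 = 1 := by
    ext x
    simpa [σ, Equiv.Perm.coe_pow, ← LinearEquiv.coe_pow] using congr($hg x)
  have hfix : σ.supportᶜ.card ≠ 1 := fun h => hM <| by
    rw [Nat.card_eq_fintype_card]
    exact (h ▸ Equiv.Perm.card_compl_support_modEq hσ).symm
  have h0 : 0 ∈ σ.supportᶜ := by simp [σ]
  obtain ⟨w, hw, hw0⟩ :=
    Finset.exists_mem_ne (lt_of_le_of_ne (Finset.card_pos.2 ⟨0, h0⟩) hfix.symm) 0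
  exact ⟨w, hw0, by simpa [σ] using hw⟩

section CharTwo

variable {E : Type*} [AddCommGroup E] [Module (ZMod 2) E] {g : E ≃ₗ[ZMod 2] E}

lemma ZModModule.add_eq_zero_iff_eq {x y : E} : x + y = 0 ↔ x = y := by
  rw [← ZModModule.sub_eq_add, sub_eq_zero]

lemma LinearEquiv.apply_apply_apply_of_pow_three (hg : g ^ 3 = 1) (v : E) :
    g (g (g v)) = v := by
  simpa [pow_succ] using congr($hg v)

lemma exists_apply_ne_self_and_orbit_sum_ne_zero [Finite E] (hg : g ^ 3 = 1) (hg1 : g ≠ 1)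
    (hE : ¬ Nat.card E ≡ 1 [MOD 3]) : ∃ v, g v ≠ v ∧ v + g v + g (g v) ≠ 0 := by
  have : Fact (Nat.Prime 3) := ⟨Nat.prime_three⟩
  obtain ⟨w, hw0, hw⟩ := g.exists_ne_zero_apply_eq_self hg hE
  obtain ⟨y, hy⟩ : ∃ y, g y ≠ y := by
    by_contra! h
    exact hg1 (LinearEquiv.ext h)
  by_cases hNy : y + g y + g (g y) = 0
  · refine ⟨w + y, ?_, ?_⟩
    · rwa [map_add, hw, Ne, add_right_inj]
    · have hNw : w + g w + g (g w) = w := by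
        rw [hw, hw, ZModModule.add_self, zero_add]
      have hsplit : w + y + g (w + y) + g (g (w + y))
          = (w + g w + g (g w)) + (y + g y + g (g y)) := by
        simp only [map_add]; abel
      rwa [hsplit, hNy, hNw, add_zero]
  · exact ⟨y, hy, hNy⟩

lemma linearIndependent_orbit_of_pow_three_eq_one (hg : g ^ 3 = 1) {v : E} (hv1 : g v ≠ v)
    (hv2 : v + g v + g (g v) ≠ 0) : LinearIndependent (ZMod 2) ![v, g v, g (g v)] := by
  have hv : v ≠ 0 := by rintro rfl; simp at hv1
  have hv12 : g (g v) ≠ g v := fun h => hv1 (g.injective h)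
  have hv02 : g (g v) ≠ v := fun h =>
    hv1 (by simpa [h] using g.apply_apply_apply_of_pow_three hg v)
  rw [Fintype.linearIndependent_iff]
  intro c hsum
  have h01 : ∀ a : ZMod 2, a = 0 ∨ a = 1 := by decide
  simp only [Fin.sum_univ_three, Matrix.cons_val] at hsum
  rcases h01 (c 0) with hc0 | hc0 <;> rcases h01 (c 1) with hc1 | hc1 <;>
    rcases h01 (c 2) with hc2 | hc2 <;>
    simp only [hc0, hc1, hc2, zero_smul, one_smul, add_zero, zero_add,
      LinearEquiv.map_eq_zero_iff] at hsum
  · exact fun i => by fin_cases i <;> assumption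
  all_goals first
    | exact absurd hsum ‹_›
    | exact absurd (ZModModule.add_eq_zero_iff_eq.1 hsum) ‹_›
    | exact absurd (ZModModule.add_eq_zero_iff_eq.1 hsum).symm ‹_›

lemma exists_basis_apply_eq_apply_succ (hdim : finrank (ZMod 2) E = 3) (hg : orderOf g = 3) :
    ∃ b : Basis (Fin 3) (ZMod 2) E, ∀ i, g (b i) = b (i + 1) := by
  have : Module.Finite (ZMod 2) E := Module.finite_of_finrank_eq_succ hdim
  have : Finite E := Module.finite_of_finite (ZMod 2)
  have hg3 : g ^ 3 = 1 := hg ▸ pow_orderOf_eq_one g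
  have hg1 : g ≠ 1 := by rintro rfl; simp at hg
  obtain ⟨v, hv1, hv2⟩ := exists_apply_ne_self_and_orbit_sum_ne_zero hg3 hg1
    (by rw [Module.natCard_eq_pow_finrank (K := ZMod 2), hdim, Nat.card_zmod]; decide)
  refine ⟨basisOfLinearIndependentOfCardEqFinrank
    (linearIndependent_orbit_of_pow_three_eq_one hg3 hv1 hv2) (by rw [hdim, Fintype.card_fin]),
    fun i => ?_⟩
  rw [coe_basisOfLinearIndependentOfCardEqFinrank]
  fin_cases i
  · rfl
  · rfl
  · exact g.apply_apply_apply_of_pow_three hg3 v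

end CharTwo

def cycleMatrix : Matrix (Fin 3) (Fin 3) (ZMod 2) := !![0, 0, 1; 1, 0, 0; 0, 1, 0]

def singerMatrix : Matrix (Fin 3) (Fin 3) (ZMod 2) := !![0, 0, 1; 0, 1, 1; 1, 1, 1]

def cycleGL : GL (Fin 3) (ZMod 2) := ⟨cycleMatrix, cycleMatrix ^ 2, by decide, by decide⟩

def singerGL : GL (Fin 3) (ZMod 2) := ⟨singerMatrix, singerMatrix ^ 6, by decide, by decide⟩

lemma LinearMap.toMatrix_eq_cycleMatrix {M : Type*} [AddCommGroup M] [Module (ZMod 2) M]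
    (b : Basis (Fin 3) (ZMod 2) M) (f : M →ₗ[ZMod 2] M) (hf : ∀ i, f (b i) = b (i + 1)) :
    LinearMap.toMatrix b b f = cycleMatrix := by
  ext i j
  rw [LinearMap.toMatrix_apply, hf, b.repr_self, Finsupp.single_apply]
  fin_cases i <;> fin_cases j <;> rfl

lemma irreducible_X_pow_three_add_X_add_one :
    Irreducible (X ^ 3 + X + 1 : (ZMod 2)[X]) := by
  have hdeg : (X ^ 3 + X + 1 : (ZMod 2)[X]).natDegree = 3 := by compute_degree!
  rw [irreducible_iff_roots_eq_zero_of_degree_le_three (by omega) (by omega),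
    Multiset.eq_zero_iff_forall_notMem]
  intro a
  rw [mem_roots (ne_zero_of_natDegree_gt (n := 0) (by omega))]
  simp only [IsRoot, eval_add, eval_pow, eval_X, eval_one]
  revert a
  decide

lemma minpoly_eq_X_pow_three_add_X_add_one_iff {A : Type*} [Ring A] [Algebra (ZMod 2) A]
    [Nontrivial A] (a : A) : minpoly (ZMod 2) a = X ^ 3 + X + 1 ↔ a ^ 3 + a + 1 = 0 := by
  rw [eq_comm, minpoly.eq_iff_aeval_eq_zero irreducible_X_pow_three_add_X_add_one
    (by monicity!)]
  simp

-- an exhaustive check over all 512 matrices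
set_option maxRecDepth 10000 in
lemma singerMatrix_eq_pow_of_conj : ∀ A : Matrix (Fin 3) (Fin 3) (ZMod 2),
    A ^ 3 + A + 1 = 0 → cycleMatrix * A = A ^ 2 * cycleMatrix →
      singerMatrix = A ∨ singerMatrix = A ^ 2 ∨ singerMatrix = A ^ 4 := by
  decide

lemma orderOf_singerGL : orderOf singerGL = 7 :=
  have : Fact (Nat.Prime 7) := ⟨by norm_num⟩
  orderOf_eq_prime (by decide) (by decide)

lemma cycleGL_conj_singerGL : cycleGL * singerGL * cycleGL⁻¹ = singerGL ^ 2 := by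
  decide

lemma singerGL_mem_zpowers_of_conj {f : GL (Fin 3) (ZMod 2)}
    (hf : (f : Matrix (Fin 3) (Fin 3) (ZMod 2)) ^ 3 + f + 1 = 0)
    (hconj : cycleGL * f * cycleGL⁻¹ = f ^ 2) : singerGL ∈ Subgroup.zpowers f := by
  rw [mul_inv_eq_iff_eq_mul, Units.ext_iff] at hconj
  push_cast at hconj
  obtain ⟨k, hk⟩ : ∃ k : ℕ, singerMatrix = (f : Matrix (Fin 3) (Fin 3) (ZMod 2)) ^ k := by
    rcases singerMatrix_eq_pow_of_conj f hf hconj with h | h | h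
    exacts [⟨1, by rw [h, pow_one]⟩, ⟨2, h⟩, ⟨4, h⟩]
  exact Subgroup.mem_zpowers_iff.2
    ⟨k, Units.ext (by rw [zpow_natCast, Units.val_pow_eq_pow_val, ← hk]; rfl)⟩

theorem existsUnique_isRelated_cycleGL :
    ∃! M : Subgroup (GL (Fin 3) (ZMod 2)),
      IsRelated
        (fun f : GL (Fin 3) (ZMod 2) =>
          minpoly (ZMod 2) (f : Matrix (Fin 3) (Fin 3) (ZMod 2)) = X ^ 3 + X + 1)
        7 cycleGL M := by
  simp only [minpoly_eq_X_pow_three_add_X_add_one_iff]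
  refine ⟨Subgroup.zpowers singerGL, ⟨by rw [Nat.card_zpowers, orderOf_singerGL],
    ⟨singerGL, Subgroup.mem_zpowers _, by decide, cycleGL_conj_singerGL⟩,
    fun f hf _ => conj_eq_sq_of_mem_zpowers cycleGL_conj_singerGL hf⟩, ?_⟩
  rintro M ⟨hcard, ⟨f, hfM, hf, hconj⟩, -⟩
  have : Finite M := Nat.finite_of_card_ne_zero (by omega)
  have hle : Subgroup.zpowers singerGL ≤ M :=
    Subgroup.zpowers_le.2 (Subgroup.zpowers_le.2 hfM (singerGL_mem_zpowers_of_conj hf hconj))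
  exact (Subgroup.eq_of_le_of_card_ge hle (by rw [hcard, Nat.card_zpowers, orderOf_singerGL])).symm

/-- Every element `g` of order 3 in `GL(E)` (for `E` 3-dimensional over `F₂`)
is related to a unique subgroup `M` of order 7: there is exactly one subgroup
`M` of order 7 containing a generator `f` with minimal polynomial `X³+X+1`
such that `g f g⁻¹ = f²` (equivalently, every such generator of `M` satisfies
this relation). -/
theorem stmt_12 (E : Type*) [AddCommGroup E] [Module (ZMod 2) E]
    (hdim : Module.finrank (ZMod 2) E = 3)
    (g : E ≃ₗ[ZMod 2] E) (hg : orderOf g = 3) :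
    ∃! M : Subgroup (E ≃ₗ[ZMod 2] E), Nat.card M = 7 ∧
      (∃ f ∈ M, minpoly (ZMod 2) (f : E →ₗ[ZMod 2] E) = X ^ 3 + X + 1 ∧
        g * f * g⁻¹ = f ^ 2) ∧
      (∀ f ∈ M, minpoly (ZMod 2) (f : E →ₗ[ZMod 2] E) = X ^ 3 + X + 1 →
        g * f * g⁻¹ = f ^ 2) := by
  obtain ⟨b, hb⟩ := exists_basis_apply_eq_apply_succ hdim hg
  have hbg : b.toGL g = cycleGL := Units.ext (LinearMap.toMatrix_eq_cycleMatrix b g hb)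
  have hminpoly (f : E ≃ₗ[ZMod 2] E) :
      minpoly (ZMod 2) (f : E →ₗ[ZMod 2] E) = X ^ 3 + X + 1 ↔
        minpoly (ZMod 2) (b.toGL f : Matrix (Fin 3) (Fin 3) (ZMod 2)) = X ^ 3 + X + 1 := by
    rw [b.coe_toGL, LinearMap.minpoly_toMatrix]
  exact (b.toGL.existsUnique_isRelated_iff hminpoly g).2 (hbg ▸ existsUnique_isRelated_cycleGL)
end

section
/- Let E be a 3-dimensional F₂-vector space and M₁ ≠ M₂ two subgroups of order 7 of GL(E). Then N(M₁) ∩ N(M₂) is a subgroup of order 3. -/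
/-!
`GL₃(𝔽₂)` has order `7 · 6 · 4 = 168`, so its subgroups of order 7 are its Sylow 7-subgroups.
There are 8 of them (the only divisor of 24 that is `≡ 1 mod 7`, other than 1), hence each
normalizer has order `168 / 8 = 21`. `N(M₁)` fixes `M₁` and moves the remaining 7 Sylow
subgroups; already `M₁` acts on them without fixed points, so `N(M₁)` permutes them
transitively, and the stabilizer `N(M₁) ∩ N(M₂)` of `M₂` has order `21 / 7 = 3`.
-/

open Subgroup MulAction Module

namespace Sylow

variable {G : Type*} [Group G] {p : ℕ}

theorem eq_of_le {P Q : Sylow p G} (h : (P : Subgroup G) ≤ Q) : P = Q :=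
  Sylow.ext (P.3 Q.2 h).symm

theorem stabilizer_eq_subgroupOf_normalizer (H : Subgroup G) (P : Sylow p G) :
    stabilizer H P = (normalizer (P : Set G)).subgroupOf H := by
  ext h
  exact Sylow.smul_eq_iff_mem_normalizer

theorem eq_of_le_normalizer {P Q : Sylow p G} (h : (P : Subgroup G) ≤ normalizer (Q : Set G)) :
    P = Q :=
  eq_of_le <| P.2.sylow_mem_fixedPoints_iff.1 <| (P : Subgroup G).sylow_mem_fixedPoints_iff.2 h

variable [Fact p.Prime]

theorem ncard_orbit_eq_prime {P Q : Sylow p G} (hPQ : P ≠ Q) (hP : Nat.card P = p) :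
    (orbit (P : Subgroup G) Q).ncard = p := by
  have hdvd := index_dvd_card (stabilizer (P : Subgroup G) Q)
  rw [index_stabilizer, hP] at hdvd
  refine ((Nat.dvd_prime Fact.out).1 hdvd).resolve_left fun h1 => hPQ (eq_of_le_normalizer ?_)
  rwa [← index_stabilizer, index_eq_one, stabilizer_eq_subgroupOf_normalizer, subgroupOf_eq_top] at h1

/-- `N(P)` fixes `P`, so the `N(P)`-orbit of `Q` lies among the other `p` Sylow subgroups, and it
contains the `P`-orbit of `Q`, which already has `p` elements. -/
theorem card_normalizer_eq_mul_card_inf {P Q : Sylow p G} (hPQ : P ≠ Q) (hP : Nat.card P = p)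
    (hn : Nat.card (Sylow p G) = p + 1) :
    Nat.card (normalizer (P : Set G)) =
      p * Nat.card (normalizer (P : Set G) ⊓ normalizer (Q : Set G) : Subgroup G) := by
  have : Finite (Sylow p G) := Nat.finite_of_card_ne_zero (by omega)
  set N := normalizer (P : Set G)
  have hsub : orbit (P : Subgroup G) Q ⊆ orbit N Q := by
    rintro _ ⟨g, rfl⟩
    exact ⟨⟨g, le_normalizer g.2⟩, rfl⟩
  have hP_nmem : P ∉ orbit N Q := by
    rintro ⟨g, hg⟩
    have hgP : g⁻¹ • P = P := smul_eq_iff_mem_normalizer.2 (g⁻¹).2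
    exact hPQ (hgP.symm.trans (eq_inv_smul_iff.2 hg).symm)
  have horbit : (orbit N Q).ncard = p := by
    have hlt : (orbit N Q).ncard < Nat.card (Sylow p G) := by
      rw [← Set.ncard_univ]
      exact Set.ncard_lt_ncard (Set.ssubset_univ_iff.2 fun h => hP_nmem (h ▸ Set.mem_univ P))
    have hge := (ncard_orbit_eq_prime hPQ hP).symm.le.trans (Set.ncard_le_ncard hsub)
    omega
  rw [← card_mul_index (stabilizer N Q), index_stabilizer, horbit, mul_comm,
    stabilizer_eq_subgroupOf_normalizer, ← inf_subgroupOf_right,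
    Nat.card_congr (subgroupOfEquivOfLe inf_le_right).toEquiv, inf_comm]

end Sylow

theorem card_linearEquiv_self {K E : Type*} [Field K] [Fintype K] [AddCommGroup E] [Module K E]
    [FiniteDimensional K E] :
    Nat.card (E ≃ₗ[K] E) =
      ∏ i : Fin (finrank K E), (Fintype.card K ^ finrank K E - Fintype.card K ^ (i : ℕ)) := by
  rw [← Matrix.card_GL_field, Nat.card_congr
    ((Matrix.GeneralLinearGroup.toLin' (Module.finBasis K E)).trans
      (LinearMap.GeneralLinearGroup.generalLinearEquiv K E)).toEquiv]

section Order168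

variable {G : Type*} [Group G]

def Subgroup.toSylowOfCardEqPrime {p : ℕ} [Fact p.Prime] {H : Subgroup G} (hH : Nat.card H = p)
    (hG : ¬ p ^ 2 ∣ Nat.card G) : Sylow p G :=
  (IsPGroup.of_card (n := 1) (by rw [hH, pow_one])).toSylow fun hdvd =>
    hG (by rw [← card_mul_index H, hH, sq]; exact mul_dvd_mul_left p hdvd)

theorem card_sylow_seven_eq_eight [Finite G] (hG : Nat.card G = 168) {P Q : Sylow 7 G}
    (hPQ : P ≠ Q) (hP : Nat.card P = 7) : Nat.card (Sylow 7 G) = 8 := by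
  have : Fact (Nat.Prime 7) := ⟨by norm_num⟩
  have hidx : (P : Subgroup G).index = 24 := by
    have := card_mul_index (P : Subgroup G)
    rw [hP, hG] at this
    omega
  have hdvd : Nat.card (Sylow 7 G) ∣ 24 := hidx ▸ P.card_dvd_index
  have hmod := card_sylow_modEq_one 7 G
  have hne : Nat.card (Sylow 7 G) ≠ 1 := fun h =>
    hPQ ((Nat.card_eq_one_iff_unique.1 h).1.elim P Q)
  have hle := Nat.le_of_dvd (by norm_num) hdvd
  interval_cases Nat.card (Sylow 7 G) <;> simp_all [Nat.ModEq]

theorem card_normalizer_inf_normalizer_eq_three [Finite G] (hG : Nat.card G = 168)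
    {M₁ M₂ : Subgroup G} (h₁ : Nat.card M₁ = 7) (h₂ : Nat.card M₂ = 7) (hne : M₁ ≠ M₂) :
    Nat.card (normalizer (M₁ : Set G) ⊓ normalizer (M₂ : Set G) : Subgroup G) = 3 := by
  have : Fact (Nat.Prime 7) := ⟨by norm_num⟩
  have h49 : ¬ 7 ^ 2 ∣ Nat.card G := by rw [hG]; norm_num
  let P₁ := M₁.toSylowOfCardEqPrime h₁ h49
  let P₂ := M₂.toSylowOfCardEqPrime h₂ h49
  have hP : P₁ ≠ P₂ := fun h => hne (congrArg (fun P : Sylow 7 G => (P : Subgroup G)) h)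
  have hn := card_sylow_seven_eq_eight hG hP h₁
  have hN : Nat.card (normalizer (P₁ : Set G)) = 21 := by
    have := card_mul_index (normalizer (P₁ : Set G))
    rw [← P₁.card_eq_index_normalizer, hn, hG] at this
    omega
  have := Sylow.card_normalizer_eq_mul_card_inf hP h₁ hn
  change Nat.card (normalizer (P₁ : Set G) ⊓ normalizer (P₂ : Set G) : Subgroup G) = 3
  omega

end Order168

/-- For two distinct subgroups `M₁ ≠ M₂` of order 7 of `GL(E)` (with `E`
3-dimensional over `F₂`), the intersection of their normalizers is a subgroup
of order 3. -/
theorem stmt_14 (E : Type*) [AddCommGroup E] [Module (ZMod 2) E]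
    (hdim : Module.finrank (ZMod 2) E = 3)
    (M₁ M₂ : Subgroup (E ≃ₗ[ZMod 2] E))
    (h₁ : Nat.card M₁ = 7) (h₂ : Nat.card M₂ = 7) (hne : M₁ ≠ M₂) :
    Nat.card (Subgroup.normalizer (M₁ : Set (E ≃ₗ[ZMod 2] E)) ⊓ Subgroup.normalizer (M₂ : Set (E ≃ₗ[ZMod 2] E)) : Subgroup (E ≃ₗ[ZMod 2] E)) = 3 := by
  have : FiniteDimensional (ZMod 2) E := Module.finite_of_finrank_eq_succ hdim
  have hG : Nat.card (E ≃ₗ[ZMod 2] E) = 168 := by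
    rw [card_linearEquiv_self, hdim, ZMod.card]
    rfl
  have : Finite (E ≃ₗ[ZMod 2] E) := Nat.finite_of_card_ne_zero (by rw [hG]; norm_num)
  exact card_normalizer_inf_normalizer_eq_three hG h₁ h₂ hne
end

section
/- Let E be a 3-dimensional F₂-vector space and ℱ the set of 8 subgroups of order 7 of GL(E). For distinct M₁, M₂ ∈ ℱ, define vec(M₁,M₂) ∈ E to be the unique nonzero vector fixed by the order-3 elements of N(M₁) ∩ N(M₂), and vec(M,M) = 0. Then for any three elements M, M₁, M₂ of ℱ, vec(M₁,M₂) = vec(M₁,M) + vec(M,M₂) (Chasles relation), so ℱ is an F₂-affine space of dimension 3 with vector space E. -/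
/-!
The subgroups of order 7 of `GL(E) ≅ GL₃(F₂)` are its Sylow 7-subgroups, since
`|GL₃(F₂)| = 168 = 7 · 24`; by Sylow's theorems there are 1 or 8 of them, and eight explicit
ones are distinct. For two of them, `Mᵢ ≠ Mⱼ`, an explicit element of order 3 normalizes both
and fixes exactly one nonzero vector, which `vec Mᵢ Mⱼ` must therefore be. These vectors are
the differences `pⱼ - pᵢ` of eight explicit points `pᵢ ∈ F₂³`, so the Chasles relation becomes
`pⱼ - pᵢ = (pₖ - pᵢ) + (pⱼ - pₖ)`.
-/

open Matrix

instance fact_prime_seven : Fact (Nat.Prime 7) := ⟨by norm_num⟩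

section Sylow

variable {G : Type*} [Group G] [Finite G]

theorem Subgroup.mem_normalizer_of_map_conj_le {H : Subgroup G} {t : G}
    (h : H.map (MulAut.conj t).toMonoidHom ≤ H) : t ∈ normalizer (H : Set G) :=
  mem_normalizer_iff_map_conj_eq.mpr <| eq_of_le_of_card_ge h
    (card_map_of_injective (MulAut.conj t).injective).ge

theorem Subgroup.mem_normalizer_zpowers_of_conj_mem {g t : G} (h : t * g * t⁻¹ ∈ zpowers g) :
    t ∈ normalizer (zpowers g : Set G) :=
  mem_normalizer_of_map_conj_le <| by
    rw [MonoidHom.map_zpowers]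
    exact zpowers_le.mpr h

def subgroupCardEqPrimeEquivSylow {p m : ℕ} [Fact p.Prime] (hG : Nat.card G = p * m)
    (hpm : ¬ p ∣ m) : {H : Subgroup G // Nat.card H = p} ≃ Sylow p G :=
  have hp : p ^ (Nat.card G).factorization p = p := by
    rw [hG, Nat.factorization_mul (Fact.out : p.Prime).ne_zero (by rintro rfl; simp at hpm)]
    simp [Nat.Prime.factorization_self Fact.out, Nat.factorization_eq_zero_of_not_dvd hpm]
  { toFun H := Sylow.ofCard H.1 (H.2.trans hp.symm)
    invFun P := ⟨P, P.card_eq_multiplicity.trans hp⟩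
    left_inv _ := rfl
    right_inv _ := rfl }

theorem natCard_subgroup_card_eq_prime {p m : ℕ} [Fact p.Prime] (hG : Nat.card G = p * m)
    (hpm : ¬ p ∣ m) :
    Nat.card {H : Subgroup G // Nat.card H = p} ≡ 1 [MOD p] ∧
      Nat.card {H : Subgroup G // Nat.card H = p} ∣ m := by
  let e := subgroupCardEqPrimeEquivSylow hG hpm
  rw [Nat.card_congr e]
  obtain ⟨P⟩ := Sylow.nonempty (p := p) (G := G)
  have hindex : P.index = m := by
    have hP : Nat.card P = p := (e.symm P).2
    have := P.card_mul_index
    rw [hG, hP] at this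
    exact Nat.eq_of_mul_eq_mul_left (Fact.out : p.Prime).pos this
  exact ⟨card_sylow_modEq_one p G, hindex ▸ P.card_dvd_index⟩

theorem natCard_subgroup_card_eq_seven (hG : Nat.card G = 168)
    (h8 : 8 ≤ Nat.card {H : Subgroup G // Nat.card H = 7}) :
    Nat.card {H : Subgroup G // Nat.card H = 7} = 8 := by
  obtain ⟨hmod, hdvd⟩ := natCard_subgroup_card_eq_prime (p := 7) (m := 24) hG (by norm_num)
  have hle := Nat.le_of_dvd (by norm_num) hdvd
  interval_cases Nat.card {H : Subgroup G // Nat.card H = 7} <;> simp_all [Nat.ModEq]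

end Sylow

namespace GL3F2

def sylowGenMat : Fin 8 → Matrix (Fin 3) (Fin 3) (ZMod 2) :=
  ![!![0, 0, 1; 0, 1, 1; 1, 1, 0], !![0, 0, 1; 0, 1, 1; 1, 1, 1], !![0, 0, 1; 1, 0, 0; 0, 1, 1],
    !![0, 0, 1; 1, 0, 0; 1, 1, 0], !![0, 0, 1; 1, 0, 1; 0, 1, 0], !![0, 0, 1; 1, 0, 1; 1, 1, 1],
    !![0, 0, 1; 1, 1, 0; 0, 1, 0], !![0, 0, 1; 1, 1, 0; 0, 1, 1]]

def frobeniusMat : Fin 8 → Matrix (Fin 3) (Fin 3) (ZMod 2) :=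
  ![!![0, 1, 0; 0, 0, 1; 1, 0, 0], !![0, 0, 1; 1, 0, 0; 0, 1, 0], !![1, 1, 0; 1, 0, 0; 0, 0, 1],
    !![1, 0, 1; 0, 1, 0; 1, 0, 0], !![1, 0, 0; 0, 0, 1; 0, 1, 1], !![0, 1, 0; 1, 1, 0; 0, 0, 1],
    !![0, 0, 1; 0, 1, 0; 1, 0, 1], !![1, 0, 0; 0, 1, 1; 0, 1, 0]]

def point : Fin 8 → Fin 3 → ZMod 2 :=
  ![![0, 0, 0], ![1, 1, 1], ![1, 0, 1], ![0, 0, 1], ![0, 1, 0], ![1, 0, 0], ![0, 1, 1], ![1, 1, 0]]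

theorem sylowGenMat_pow_seven : ∀ i, sylowGenMat i ^ 7 = 1 := by decide +kernel

theorem frobeniusMat_pow_three : ∀ i, frobeniusMat i ^ 3 = 1 := by decide +kernel

def sylowGen (i : Fin 8) : GL (Fin 3) (ZMod 2) :=
  Units.ofPowEqOne _ 7 (sylowGenMat_pow_seven i) (by norm_num)

/-- The Frobenius of the `F₈`-structure on `F₂³` in which `sylowGen i` is multiplication by a
primitive element: it conjugates `sylowGen i` to its square. -/
def frobenius (i : Fin 8) : GL (Fin 3) (ZMod 2) :=
  Units.ofPowEqOne _ 3 (frobeniusMat_pow_three i) (by norm_num)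

theorem sylowGen_ne_one : ∀ i, sylowGen i ≠ 1 := by decide +kernel

theorem sylowGen_pow_ne_sylowGen :
    ∀ i j, i ≠ j → ∀ k : Fin 7, sylowGen i ^ (k : ℕ) ≠ sylowGen j := by
  decide +kernel

/-- The subgroups of order 3 of `N(⟨sylowGen i⟩) = ⟨sylowGen i⟩ ⋊ ⟨frobenius i⟩` are generated by
the conjugates of `frobenius i` by powers of `sylowGen i`, so a generator of `N(Mᵢ) ∩ N(Mⱼ)` is
found among them. -/
theorem exists_conj_frobenius_normalizes_fixes : ∀ i j, i ≠ j → ∃ a : Fin 7,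
    let t := sylowGen i ^ (a : ℕ) * frobenius i * (sylowGen i ^ (a : ℕ))⁻¹
    t * sylowGen i * t⁻¹ = sylowGen i ^ 2 ∧
    (∃ c : Fin 7, t * sylowGen j * t⁻¹ = sylowGen j ^ (c : ℕ)) ∧
    ∀ w, (t : Matrix (Fin 3) (Fin 3) (ZMod 2)) *ᵥ w = w ↔ w = 0 ∨ w = point j - point i := by
  decide +kernel

theorem sylowGen_pow_seven (i : Fin 8) : sylowGen i ^ 7 = 1 :=
  Units.pow_ofPowEqOne _ _

theorem orderOf_sylowGen (i : Fin 8) : orderOf (sylowGen i) = 7 :=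
  orderOf_eq_prime (sylowGen_pow_seven i) (sylowGen_ne_one i)

theorem zpowers_sylowGen_injective :
    Function.Injective fun i ↦ Subgroup.zpowers (sylowGen i) := by
  intro i j hij
  by_contra hne
  classical
  have hj : sylowGen j ∈ (Finset.range 7).image (sylowGen i ^ ·) := by
    rw [← orderOf_sylowGen i, ← mem_zpowers_iff_mem_range_orderOf]
    exact (SetLike.ext_iff.mp hij _).mpr (Subgroup.mem_zpowers _)
  obtain ⟨k, hk, hkj⟩ := Finset.mem_image.mp hj
  exact sylowGen_pow_ne_sylowGen i j hne ⟨k, Finset.mem_range.mp hk⟩ hkj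

section Transfer

variable {E : Type*} [AddCommGroup E] [Module (ZMod 2) E] (e : E ≃ₗ[ZMod 2] (Fin 3 → ZMod 2))

def glEquiv : GL (Fin 3) (ZMod 2) ≃* (E ≃ₗ[ZMod 2] E) :=
  (GeneralLinearGroup.toLin.trans (LinearMap.GeneralLinearGroup.congrLinearEquiv e.symm)).trans
    (LinearMap.GeneralLinearGroup.generalLinearEquiv _ _)

theorem glEquiv_apply (A : GL (Fin 3) (ZMod 2)) (x : E) : glEquiv e A x = e.symm (A *ᵥ e x) := by
  simp [glEquiv, GeneralLinearGroup.toLin]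

def sylow (i : Fin 8) : Subgroup (E ≃ₗ[ZMod 2] E) :=
  (Subgroup.zpowers (sylowGen i)).map (glEquiv e).toMonoidHom

theorem natCard_sylow (i : Fin 8) : Nat.card (sylow e i) = 7 := by
  rw [sylow, Subgroup.card_map_of_injective (glEquiv e).injective, Nat.card_zpowers,
    orderOf_sylowGen]

theorem sylow_injective : Function.Injective (sylow e) :=
  (Subgroup.map_injective (glEquiv e).injective).comp zpowers_sylowGen_injective

theorem bijective_sylow : Function.Bijective fun i ↦
    (⟨sylow e i, natCard_sylow e i⟩ : {M : Subgroup (E ≃ₗ[ZMod 2] E) // Nat.card M = 7}) := by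
  have : Finite (E ≃ₗ[ZMod 2] E) := Finite.of_equiv _ (glEquiv e).toEquiv
  have hG : Nat.card (E ≃ₗ[ZMod 2] E) = 168 := by
    rw [← Nat.card_congr (glEquiv e).toEquiv, card_GL_field]
    simp [Fin.prod_univ_three]
  have hinj : Function.Injective fun i ↦
      (⟨sylow e i, natCard_sylow e i⟩ : {M : Subgroup (E ≃ₗ[ZMod 2] E) // Nat.card M = 7}) :=
    fun i j h ↦ sylow_injective e (congrArg Subtype.val h)
  refine hinj.bijective_of_nat_card_le ?_
  rw [natCard_subgroup_card_eq_seven hG (by simpa using Nat.card_le_card_of_injective _ hinj),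
    Nat.card_fin]

theorem exists_mem_normalizer_sylow_fixed {i j : Fin 8} (hij : i ≠ j) :
    ∃ t ∈ Subgroup.normalizer (sylow e i : Set (E ≃ₗ[ZMod 2] E)) ⊓
        Subgroup.normalizer (sylow e j : Set (E ≃ₗ[ZMod 2] E)),
      ∀ x : E, t x = x → x = 0 ∨ x = e.symm (point j - point i) := by
  obtain ⟨a, hi, ⟨c, hj⟩, hfix⟩ := exists_conj_frobenius_normalizes_fixes i j hij
  set t := sylowGen i ^ (a : ℕ) * frobenius i * (sylowGen i ^ (a : ℕ))⁻¹
  have hnorm : ∀ k n, t * sylowGen k * t⁻¹ = sylowGen k ^ n →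
      glEquiv e t ∈ Subgroup.normalizer (sylow e k : Set (E ≃ₗ[ZMod 2] E)) := by
    intro k n h
    rw [sylow, ← Subgroup.map_equiv_normalizer_eq]
    exact Subgroup.mem_map_of_mem _ <| Subgroup.mem_normalizer_zpowers_of_conj_mem <|
      h ▸ Subgroup.pow_mem _ (Subgroup.mem_zpowers _) n
  refine ⟨glEquiv e t, ⟨hnorm i 2 hi, hnorm j c hj⟩, fun x hx ↦ ?_⟩
  rw [glEquiv_apply, LinearEquiv.symm_apply_eq] at hx
  rcases (hfix (e x)).mp hx with h | h
  · exact .inl (e.map_eq_zero_iff.mp h)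
  · exact .inr (e.eq_symm_apply.mpr h)

end Transfer

end GL3F2

/-- Let `E` be a 3-dimensional `F₂`-vector space and `vec` the map assigning to
each pair of order-7 subgroups `M₁ ≠ M₂` of `GL(E)` the unique nonzero vector
fixed by all elements of `N(M₁) ⊓ N(M₂)` (and `vec M M = 0`).  Then the Chasles
relation `vec M₁ M₂ = vec M₁ M + vec M M₂` holds for all order-7 subgroups
`M, M₁, M₂`, and the set of order-7 subgroups has 8 elements, so it is an
`F₂`-affine space of dimension 3 with vector space `E`. -/
theorem stmt_16 (E : Type*) [AddCommGroup E] [Module (ZMod 2) E]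
    (hdim : Module.finrank (ZMod 2) E = 3)
    (vec : Subgroup (E ≃ₗ[ZMod 2] E) → Subgroup (E ≃ₗ[ZMod 2] E) → E)
    (hdiag : ∀ M, vec M M = 0)
    (hvec : ∀ M₁ M₂ : Subgroup (E ≃ₗ[ZMod 2] E), Nat.card M₁ = 7 → Nat.card M₂ = 7 → M₁ ≠ M₂ →
      vec M₁ M₂ ≠ 0 ∧
      ∀ g ∈ Subgroup.normalizer (M₁ : Set (E ≃ₗ[ZMod 2] E)) ⊓ Subgroup.normalizer (M₂ : Set (E ≃ₗ[ZMod 2] E)), g (vec M₁ M₂) = vec M₁ M₂) :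
    Nat.card {M : Subgroup (E ≃ₗ[ZMod 2] E) // Nat.card M = 7} = 8 ∧
    ∀ M M₁ M₂ : Subgroup (E ≃ₗ[ZMod 2] E),
      Nat.card M = 7 → Nat.card M₁ = 7 → Nat.card M₂ = 7 →
      vec M₁ M₂ = vec M₁ M + vec M M₂ := by
  have : Module.Finite (ZMod 2) E := Module.finite_of_finrank_eq_succ hdim
  let e := (Module.finBasisOfFinrankEq (ZMod 2) E hdim).equivFun
  have hbij := GL3F2.bijective_sylow e
  have hsurj : ∀ M : Subgroup (E ≃ₗ[ZMod 2] E), Nat.card M = 7 → ∃ i, GL3F2.sylow e i = M :=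
    fun M hM ↦ (hbij.2 ⟨M, hM⟩).imp fun _ h ↦ congrArg Subtype.val h
  have hvec_sylow : ∀ i j, vec (GL3F2.sylow e i) (GL3F2.sylow e j) =
      e.symm (GL3F2.point j - GL3F2.point i) := by
    intro i j
    rcases eq_or_ne i j with rfl | hij
    · simp [hdiag]
    obtain ⟨hne, hfixed⟩ := hvec _ _ (GL3F2.natCard_sylow e i) (GL3F2.natCard_sylow e j)
      ((GL3F2.sylow_injective e).ne hij)
    obtain ⟨t, ht, hfix⟩ := GL3F2.exists_mem_normalizer_sylow_fixed e hij
    exact (hfix _ (hfixed t ht)).resolve_left hne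
  refine ⟨(Nat.card_congr (Equiv.ofBijective _ hbij)).symm.trans (Nat.card_fin 8),
    fun M M₁ M₂ hM hM₁ hM₂ ↦ ?_⟩
  obtain ⟨k, rfl⟩ := hsurj M hM
  obtain ⟨i, rfl⟩ := hsurj M₁ hM₁
  obtain ⟨j, rfl⟩ := hsurj M₂ hM₂
  rw [hvec_sylow, hvec_sylow, hvec_sylow, ← map_add, sub_add_sub_cancel']
end

section
/- Let E be an F₂-vector space of dimension n ≥ 4, ℰ the affine space over E, 𝒢 its affine group, and s : GL(E) → 𝒢 a section of the projection 𝒢 → GL(E). If s is not of the form f ↦ f_a for any point a ∈ ℰ, then the subgroup s(GL(E)) acts transitively on ℰ. -/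
/-!
Multiplication by a generator of `𝔽_{2ⁿ}ˣ`, transported to `E`, is a Singer cycle `g`: its powers
act transitively on `E ∖ {0}`. As `E` has more than two points, `g` fixes no nonzero vector, so the
affine map `s g` has a fixed point `a`, which is then fixed by every `s (g ^ m)`. Since the linear
part of `s (g ^ m)` is `g ^ m`, these maps act transitively on `E ∖ {a}`; and since `s` is not of the
form `f ↦ f_a`, some `s f` moves `a`, so `s(GL(E))` has a single orbit.
-/

namespace LinearEquiv

variable {R M N : Type*} [Semiring R] [AddCommMonoid M] [AddCommMonoid N] [Module R M] [Module R N]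

def autCongr (e : M ≃ₗ[R] N) : (M ≃ₗ[R] M) ≃* (N ≃ₗ[R] N) where
  toFun f := e.symm ≪≫ₗ f ≪≫ₗ e
  invFun f := e ≪≫ₗ f ≪≫ₗ e.symm
  left_inv f := by ext; simp
  right_inv f := by ext; simp
  map_mul' f g := by ext; simp

@[simp]
theorem autCongr_apply (e : M ≃ₗ[R] N) (f : M ≃ₗ[R] M) (x : N) :
    e.autCongr f x = e (f (e.symm x)) :=
  rfl

end LinearEquiv

section SingerCycle

variable {F E E' : Type*} [Field F] [AddCommGroup E] [Module F E] [AddCommGroup E'] [Module F E']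

/-- A cyclic subgroup of `GL(E)` that is transitive on `E ∖ {0}` acts regularly on it, so over
`𝔽_q` this is the usual notion of an element of order `qⁿ - 1` generating a Singer subgroup. -/
def LinearEquiv.IsSingerCycle (g : E ≃ₗ[F] E) : Prop :=
  ∀ x y : E, x ≠ 0 → y ≠ 0 → ∃ m : ℤ, (g ^ m) x = y

namespace LinearEquiv.IsSingerCycle

theorem autCongr {g : E ≃ₗ[F] E} (hg : g.IsSingerCycle) (e : E ≃ₗ[F] E') :
    (e.autCongr g).IsSingerCycle := by
  intro x y hx hy
  obtain ⟨m, hm⟩ := hg (e.symm x) (e.symm y) (by simpa using hx) (by simpa using hy)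
  exact ⟨m, by rw [← map_zpow, autCongr_apply, hm, apply_symm_apply]⟩

theorem eq_zero_of_apply_eq_self {g : E ≃ₗ[F] E} (hg : g.IsSingerCycle) (hE : 3 ≤ ENat.card E)
    {x : E} (hx : g x = x) : x = 0 := by
  by_contra hx0
  obtain ⟨y, hy0, hyx⟩ := ENat.exists_ne_ne_of_three_le hE 0 x
  obtain ⟨m, hm⟩ := hg x y hx0 hy0
  have hfix : (g ^ m) x = x := (MulAction.stabilizer _ x).zpow_mem (show g ∈ _ from hx) m
  exact hyx (hm.symm.trans hfix)

end LinearEquiv.IsSingerCycle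

theorem isSingerCycle_toLinearEquiv_of_forall_mem_zpowers {K : Type*} [Field K] [Algebra F K]
    {γ : Kˣ} (hγ : ∀ u, u ∈ Subgroup.zpowers γ) :
    (DistribMulAction.toLinearEquiv F K γ).IsSingerCycle := by
  intro x y hx hy
  obtain ⟨m, hm⟩ := Subgroup.mem_zpowers_iff.mp (hγ (Units.mk0 y hy * (Units.mk0 x hx)⁻¹))
  refine ⟨m, ?_⟩
  rw [← DistribMulAction.toModuleAut_apply, ← map_zpow, DistribMulAction.toModuleAut_apply,
    DistribMulAction.toLinearEquiv_apply, hm, Units.smul_def]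
  simp [hx]

end SingerCycle

theorem exists_isSingerCycle (F E : Type*) [Field F] [Finite F] [AddCommGroup E] [Module F E]
    [FiniteDimensional F E] : ∃ g : E ≃ₗ[F] E, g.IsSingerCycle := by
  rcases eq_or_ne (Module.finrank F E) 0 with hn | hn
  · have := Module.finrank_zero_iff.mp hn
    exact ⟨1, fun x _ hx _ => absurd (Subsingleton.elim x 0) hx⟩
  have : NeZero (Module.finrank F E) := ⟨hn⟩
  obtain ⟨p, _⟩ := CharP.exists F
  have := Fact.mk (CharP.char_is_prime F p)
  let K := FiniteField.Extension F p (Module.finrank F E)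
  obtain ⟨γ, hγ⟩ := IsCyclic.exists_generator (α := Kˣ)
  let e : K ≃ₗ[F] E := LinearEquiv.ofFinrankEq K E (FiniteField.finrank_extension F p _)
  exact ⟨_, (isSingerCycle_toLinearEquiv_of_forall_mem_zpowers hγ).autCongr e⟩

instance AffineEquiv.applyMulAction {k V P : Type*} [Ring k] [AddCommGroup V] [Module k V]
    [AddTorsor V P] : MulAction (P ≃ᵃ[k] P) P where
  smul φ p := φ p
  one_smul _ := rfl
  mul_smul _ _ _ := rfl

theorem AffineEquiv.exists_apply_eq_self_of_linear {k V P : Type*} [Field k] [AddCommGroup V]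
    [Module k V] [FiniteDimensional k V] [AddTorsor V P] (φ : P ≃ᵃ[k] P)
    (h : ∀ v, φ.linear v = v → v = 0) : ∃ p, φ p = p := by
  have hinj : Function.Injective (φ.linear.toLinearMap - LinearMap.id : V →ₗ[k] V) := by
    refine (injective_iff_map_eq_zero _).mpr fun v hv => h v ?_
    simpa [sub_eq_zero] using hv
  obtain ⟨p₀⟩ := AddTorsor.nonempty (G := V) (P := P)
  obtain ⟨v, hv⟩ := LinearMap.injective_iff_surjective.mp hinj (p₀ -ᵥ φ p₀)
  have hv' : φ.linear v = v + (p₀ -ᵥ φ p₀) := eq_add_of_sub_eq' hv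
  refine ⟨v +ᵥ p₀, ?_⟩
  rw [φ.map_vadd, hv', add_vadd, vsub_vadd]

theorem MulAction.isPretransitive_of_forall_ne {G X : Type*} [Group G] [MulAction G X] (a : X)
    (h : ∀ x y, x ≠ a → y ≠ a → ∃ g : G, g • x = y) (ha : ∃ g : G, g • a ≠ a) :
    MulAction.IsPretransitive G X := by
  obtain ⟨g₀, hg₀⟩ := ha
  rw [MulAction.isPretransitive_iff_base (g₀ • a)]
  intro x
  by_cases hx : x = a
  · exact ⟨g₀⁻¹, by rw [inv_smul_smul, hx]⟩
  · exact h _ _ hg₀ hx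

section AffineSection

variable {k E : Type*} [Field k] [AddCommGroup E] [Module k E]

theorem exists_forall_zpow_apply_eq_self_of_linear [FiniteDimensional k E]
    (s : (E ≃ₗ[k] E) →* (E ≃ᵃ[k] E)) (hs : ∀ f, (s f).linear = f) {g : E ≃ₗ[k] E}
    (hg : ∀ v, g v = v → v = 0) : ∃ a, ∀ m : ℤ, s (g ^ m) a = a := by
  obtain ⟨a, ha⟩ := (s g).exists_apply_eq_self_of_linear (by rwa [hs])
  exact ⟨a, fun m => map_zpow s g m ▸ (MulAction.stabilizer _ a).zpow_mem (show s g ∈ _ from ha) m⟩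

theorem exists_apply_eq_of_isSingerCycle (s : (E ≃ₗ[k] E) →* (E ≃ᵃ[k] E))
    (hs : ∀ f, (s f).linear = f) {g : E ≃ₗ[k] E} (hg : g.IsSingerCycle) {a : E}
    (ha : ∀ m : ℤ, s (g ^ m) a = a) {x y : E} (hx : x ≠ a) (hy : y ≠ a) :
    ∃ f, s f x = y := by
  obtain ⟨m, hm⟩ := hg (x - a) (y - a) (sub_ne_zero.mpr hx) (sub_ne_zero.mpr hy)
  refine ⟨g ^ m, ?_⟩
  have h := (s (g ^ m)).toAffineMap.linearMap_vsub x a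
  rw [AffineEquiv.linear_toAffineMap, hs, LinearEquiv.coe_coe, AffineEquiv.coe_toAffineMap, ha m,
    vsub_eq_sub, vsub_eq_sub, hm, sub_left_inj] at h
  exact h.symm

end AffineSection

/-- Let `E` be an `F₂`-vector space of dimension `n ≥ 4`, viewed as an affine
space over itself, and `s` a section of the projection from the affine group
of `E` to `GL(E)`.  If `s` is not of the form `f ↦ f_a` for any point `a`
(i.e. its image fixes no point), then `s(GL(E))` acts transitively on `E`. -/
theorem stmt_18 (E : Type*) [AddCommGroup E] [Module (ZMod 2) E]
    [FiniteDimensional (ZMod 2) E] (hdim : 4 ≤ Module.finrank (ZMod 2) E)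
    (s : (E ≃ₗ[ZMod 2] E) →* (E ≃ᵃ[ZMod 2] E))
    (hs : ∀ f : E ≃ₗ[ZMod 2] E, (s f).linear = f)
    (hnofix : ¬∃ a : E, ∀ f : E ≃ₗ[ZMod 2] E, s f a = a) :
    ∀ x y : E, ∃ f : E ≃ₗ[ZMod 2] E, s f x = y := by
  obtain ⟨g, hg⟩ := exists_isSingerCycle (ZMod 2) E
  have := Module.finite_of_finite (ZMod 2) (M := E)
  have hcard : 3 ≤ ENat.card E := by
    rw [ENat.card_eq_coe_natCard, Module.natCard_eq_pow_finrank (K := ZMod 2), Nat.card_zmod]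
    exact_mod_cast (by norm_num : 3 ≤ 2 ^ 4).trans (Nat.pow_le_pow_right two_pos hdim)
  obtain ⟨a, ha⟩ :=
    exists_forall_zpow_apply_eq_self_of_linear s hs fun _ => hg.eq_zero_of_apply_eq_self hcard
  obtain ⟨f₀, hf₀⟩ : ∃ f, s f a ≠ a := not_forall.mp (not_exists.mp hnofix a)
  have : MulAction.IsPretransitive s.range E :=
    MulAction.isPretransitive_of_forall_ne a
      (fun x y hx hy =>
        let ⟨f, hf⟩ := exists_apply_eq_of_isSingerCycle s hs hg ha hx hy
        ⟨⟨s f, s.mem_range.mpr ⟨f, rfl⟩⟩, hf⟩)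
      ⟨⟨s f₀, s.mem_range.mpr ⟨f₀, rfl⟩⟩, hf₀⟩
  intro x y
  obtain ⟨⟨_, hφ⟩, hf⟩ := MulAction.exists_smul_eq s.range x y
  obtain ⟨f, rfl⟩ := s.mem_range.mp hφ
  exact ⟨f, hf⟩
end
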